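/- Let G be a finite loopless multigraph with chromatic number χ and let ℓ ≥ 0 be even. Then χ(L_ℓ(G)) ≤ min{χ, ⌊(2/3)^{ℓ/2}(χ−3)⌋ + 3}. -/

import Mathlib

/-- A multigraph: a type of vertices, a type of edges, and an incidence map
sending each edge to an unordered pair of vertices. -/
structure Multigraph (V E : Type) where
  inc : E → Sym2 V

namespace Multigraph

variable {V E : Type}

/-- A multigraph is loopless if no edge joins a vertex to itself. -/
def Loopless (G : Multigraph V E) : Prop := ∀ e : E, ¬ (G.inc e).IsDiag

/-- A multigraph is simple if it is loopless and has no parallel edges. -/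
def Simple (G : Multigraph V E) : Prop := G.Loopless ∧ Function.Injective G.inc

/-- The underlying simple graph of a multigraph. -/
def toSimple (G : Multigraph V E) : SimpleGraph V where
  Adj u v := u ≠ v ∧ ∃ e : E, G.inc e = s(u, v)
  symm := ⟨by
    rintro u v ⟨huv, e, he⟩
    exact ⟨Ne.symm huv, e, by rw [he, Sym2.eq_swap]⟩⟩
  loopless := ⟨by rintro v ⟨h, _⟩; exact h rfl⟩

/-- The degree of a vertex: the number of edges incident to it. -/
noncomputable def degree (G : Multigraph V E) (v : V) : ℕ := Nat.card {e : E // v ∈ G.inc e}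

/-- The number of edges of a multigraph. -/
noncomputable def edgeCard (_G : Multigraph V E) : ℕ := Nat.card E

/-- An `ℓ`-arc (non-backtracking walk of length `ℓ`): an alternating sequence of
vertices and edges with consecutive edges distinct. -/
@[ext]
structure Arc (G : Multigraph V E) (ℓ : ℕ) where
  verts : Fin (ℓ + 1) → V
  edges : Fin ℓ → E
  inc_eq : ∀ i : Fin ℓ, G.inc (edges i) = s(verts i.castSucc, verts i.succ)
  nb : ∀ i j : Fin ℓ, (i : ℕ) + 1 = (j : ℕ) → edges i ≠ edges j

variable {G : Multigraph V E}

/-- The reverse of an arc. -/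
def Arc.reverse {ℓ : ℕ} (A : G.Arc ℓ) : G.Arc ℓ where
  verts i := A.verts i.rev
  edges i := A.edges i.rev
  inc_eq i := by
    show G.inc (A.edges i.rev) = s(A.verts i.castSucc.rev, A.verts i.succ.rev)
    rw [Fin.rev_castSucc, Fin.rev_succ, A.inc_eq i.rev, Sym2.eq_swap]
  nb i j hij h := by
    refine A.nb j.rev i.rev ?_ (h.symm)
    have hi := i.isLt
    have hj := j.isLt
    simp only [Fin.val_rev]
    omega

lemma Arc.reverse_reverse {ℓ : ℕ} (A : G.Arc ℓ) : A.reverse.reverse = A := by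
  ext i
  · show A.verts i.rev.rev = A.verts i
    rw [Fin.rev_rev]
  · show A.edges i.rev.rev = A.edges i
    rw [Fin.rev_rev]

/-- The length-`ℓ` prefix of an `(ℓ+1)`-arc. -/
def Arc.init {ℓ : ℕ} (A : G.Arc (ℓ + 1)) : G.Arc ℓ where
  verts i := A.verts i.castSucc
  edges i := A.edges i.castSucc
  inc_eq i := by
    show G.inc (A.edges i.castSucc) = s(A.verts i.castSucc.castSucc, A.verts i.succ.castSucc)
    rw [A.inc_eq i.castSucc, Fin.succ_castSucc]
  nb i j hij h := A.nb i.castSucc j.castSucc (by simpa using hij) h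

/-- The length-`ℓ` suffix of an `(ℓ+1)`-arc. -/
def Arc.tail {ℓ : ℕ} (A : G.Arc (ℓ + 1)) : G.Arc ℓ where
  verts i := A.verts i.succ
  edges i := A.edges i.succ
  inc_eq i := by
    show G.inc (A.edges i.succ) = s(A.verts i.castSucc.succ, A.verts i.succ.succ)
    rw [A.inc_eq i.succ, Fin.succ_castSucc]
  nb i j hij h := A.nb i.succ j.succ (by simpa using hij) h

lemma Arc.reverse_init {ℓ : ℕ} (A : G.Arc (ℓ + 1)) : A.reverse.init = A.tail.reverse := by
  ext i
  · show A.verts (Fin.castSucc i).rev = A.verts i.rev.succ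
    rw [Fin.rev_castSucc]
  · show A.edges (Fin.castSucc i).rev = A.edges i.rev.succ
    rw [Fin.rev_castSucc]

lemma Arc.reverse_tail {ℓ : ℕ} (A : G.Arc (ℓ + 1)) : A.reverse.tail = A.init.reverse := by
  ext i
  · show A.verts (Fin.succ i).rev = A.verts i.rev.castSucc
    rw [Fin.rev_succ]
  · show A.edges (Fin.succ i).rev = A.edges i.rev.castSucc
    rw [Fin.rev_succ]

/-- The reversal relation on arcs. -/
def LinkRel (G : Multigraph V E) {ℓ : ℕ} (A B : G.Arc ℓ) : Prop := B = A.reverse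

/-- An `ℓ`-link: an `ℓ`-arc up to reversal. -/
def Link (G : Multigraph V E) (ℓ : ℕ) : Type := Quot (G.LinkRel (ℓ := ℓ))

/-- The `ℓ`-link determined by an `ℓ`-arc. -/
def Link.mk {ℓ : ℕ} (A : G.Arc ℓ) : G.Link ℓ := Quot.mk (G.LinkRel) A

lemma Link.mk_reverse {ℓ : ℕ} (A : G.Arc ℓ) : (Link.mk A.reverse : G.Link ℓ) = Link.mk A :=
  (Quot.sound (show G.LinkRel A A.reverse from rfl)).symm

/-- The unordered pair of `ℓ`-links that are the two length-`ℓ` subsequences of an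
`(ℓ+1)`-link. -/
def linkEnds (G : Multigraph V E) {ℓ : ℕ} : G.Link (ℓ + 1) → Sym2 (G.Link ℓ) :=
  Quot.lift (fun A => s(Link.mk A.init, Link.mk A.tail)) (by
    rintro A B rfl
    show s(Link.mk A.init, Link.mk A.tail) = s(Link.mk A.reverse.init, Link.mk A.reverse.tail)
    rw [Arc.reverse_init, Arc.reverse_tail, Link.mk_reverse, Link.mk_reverse, Sym2.eq_swap])

/-- The `ℓ`-link graph of `G`: vertices are the `ℓ`-links, and for each
`(ℓ+1)`-link there is one edge joining its two length-`ℓ` subsequences. -/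
def linkGraph (G : Multigraph V E) (ℓ : ℕ) : Multigraph (G.Link ℓ) (G.Link (ℓ + 1)) where
  inc := G.linkEnds

/-- The set of edges used by an arc. -/
def Arc.edgeSet {ℓ : ℕ} (A : G.Arc ℓ) : Set E := Set.range A.edges

/-- The set of vertices used by an arc. -/
def Arc.vertSet {ℓ : ℕ} (A : G.Arc ℓ) : Set V := Set.range A.verts

lemma Arc.edgeSet_reverse {ℓ : ℕ} (A : G.Arc ℓ) : A.reverse.edgeSet = A.edgeSet := by
  ext e
  constructor
  · rintro ⟨i, rfl⟩; exact ⟨i.rev, rfl⟩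
  · rintro ⟨i, rfl⟩; exact ⟨i.rev, by show A.edges i.rev.rev = _; rw [Fin.rev_rev]⟩

lemma Arc.vertSet_reverse {ℓ : ℕ} (A : G.Arc ℓ) : A.reverse.vertSet = A.vertSet := by
  ext v
  constructor
  · rintro ⟨i, rfl⟩; exact ⟨i.rev, rfl⟩
  · rintro ⟨i, rfl⟩; exact ⟨i.rev, by show A.verts i.rev.rev = _; rw [Fin.rev_rev]⟩

/-- The set of edges used by a link. -/
def Link.edgeSet {ℓ : ℕ} : G.Link ℓ → Set E :=
  Quot.lift Arc.edgeSet (by rintro A B rfl; exact (Arc.edgeSet_reverse A).symm)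

/-- The set of vertices used by a link. -/
def Link.vertSet {ℓ : ℕ} : G.Link ℓ → Set V :=
  Quot.lift Arc.vertSet (by rintro A B rfl; exact (Arc.vertSet_reverse A).symm)

lemma Arc.tail_init_comm {ℓ : ℕ} (A : G.Arc (ℓ + 2)) : A.tail.init = A.init.tail := by
  ext i
  · show A.verts (Fin.castSucc i).succ = A.verts (Fin.succ i).castSucc
    rw [Fin.succ_castSucc]
  · show A.edges (Fin.castSucc i).succ = A.edges (Fin.succ i).castSucc
    rw [Fin.succ_castSucc]

/-- The middle `ℓ`-segment of an `(ℓ+2)`-arc, obtained by deleting the first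
and last edge. -/
def Arc.mid2 {ℓ : ℕ} (A : G.Arc (ℓ + 2)) : G.Arc ℓ := A.tail.init

lemma Arc.mid2_reverse {ℓ : ℕ} (A : G.Arc (ℓ + 2)) : A.reverse.mid2 = A.mid2.reverse := by
  show A.reverse.tail.init = A.tail.init.reverse
  rw [Arc.reverse_tail, Arc.reverse_init, Arc.tail_init_comm]

/-- The middle `ℓ`-segment of an `(ℓ+2)`-link. -/
def Link.mid2 {ℓ : ℕ} : G.Link (ℓ + 2) → G.Link ℓ :=
  Quot.lift (fun A => Link.mk A.mid2) (by
    rintro A B rfl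
    show Link.mk A.mid2 = Link.mk A.reverse.mid2
    rw [Arc.mid2_reverse, Link.mk_reverse])

/-- The middle unit of an arc: its middle vertex if its length is even, and its
middle edge if its length is odd. -/
def Arc.midUnit {ℓ : ℕ} (A : G.Arc ℓ) : V ⊕ E :=
  if h : Even ℓ then Sum.inl (A.verts ⟨ℓ / 2, by omega⟩)
  else Sum.inr (A.edges ⟨ℓ / 2, by
    have : ℓ % 2 = 1 := Nat.not_even_iff.mp h
    omega⟩)

lemma Arc.midUnit_reverse {ℓ : ℕ} (A : G.Arc ℓ) : A.reverse.midUnit = A.midUnit := by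
  by_cases h : Even ℓ
  · rw [Arc.midUnit, Arc.midUnit, dif_pos h, dif_pos h]
    have hk : ℓ % 2 = 0 := Nat.even_iff.mp h
    congr 1
    show A.verts (⟨ℓ / 2, _⟩ : Fin (ℓ + 1)).rev = A.verts _
    congr 1
    ext
    rw [Fin.val_rev]
    show ℓ + 1 - (ℓ / 2 + 1) = ℓ / 2
    omega
  · rw [Arc.midUnit, Arc.midUnit, dif_neg h, dif_neg h]
    have hk : ℓ % 2 = 1 := Nat.not_even_iff.mp h
    congr 1
    show A.edges (⟨ℓ / 2, _⟩ : Fin ℓ).rev = A.edges _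
    congr 1
    ext
    rw [Fin.val_rev]
    show ℓ - (ℓ / 2 + 1) = ℓ / 2
    omega

/-- The middle unit of a link: its middle vertex (even length) or middle edge
(odd length). -/
def Link.midUnit {ℓ : ℕ} : G.Link ℓ → V ⊕ E :=
  Quot.lift Arc.midUnit (by rintro A B rfl; exact (Arc.midUnit_reverse A).symm)

/-- `G` has a (nonnull) subgraph of minimum degree at least `d`. -/
def HasMinDegSubgraph (G : Multigraph V E) (d : ℕ) : Prop :=
  ∃ (V' : Set V) (E' : Set E), V'.Nonempty ∧ (∀ e ∈ E', ∀ v ∈ G.inc e, v ∈ V') ∧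
    ∀ v ∈ V', d ≤ Nat.card {e : E // e ∈ E' ∧ v ∈ G.inc e}

/-- The degeneracy of `G`: the maximum over subgraphs of the minimum degree. -/
noncomputable def degeneracy (G : Multigraph V E) : ℕ := sSup {d | G.HasMinDegSubgraph d}

/-- The edge-chromatic number of a multigraph: the least `t` such that the edges
can be `t`-coloured with edges sharing an endpoint getting distinct colours. -/
noncomputable def edgeChromaticNumber (G : Multigraph V E) : ℕ :=
  sInf {t | ∃ c : E → Fin t, ∀ e f : E, e ≠ f → (∃ v, v ∈ G.inc e ∧ v ∈ G.inc f) → c e ≠ c f}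

/-- The complete bipartite multigraph `K_{n,m}` (one edge for each pair). -/
def completeBipartiteMG (n m : ℕ) : Multigraph (Fin n ⊕ Fin m) (Fin n × Fin m) :=
  ⟨fun p => s(Sum.inl p.1, Sum.inr p.2)⟩

end Multigraph

/-- `H` contains a complete minor on `t` branch sets: `t` pairwise disjoint
nonempty connected subsets of vertices with an edge between every two of them. -/
def SimpleGraph.HasKMinor {W : Type} (H : SimpleGraph W) (t : ℕ) : Prop :=
  ∃ B : Fin t → Set W,
    (∀ i, (B i).Nonempty) ∧
    (∀ i, ((H.induce (B i)).Connected)) ∧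
    (∀ i j, i ≠ j → Disjoint (B i) (B j)) ∧
    (∀ i j, i ≠ j → ∃ u ∈ B i, ∃ v ∈ B j, H.Adj u v)

/-!
The colour classes of a `k`-colouring of `L_ℓ(G)` are grouped in triples `{3i, 3i+1, 3i+2}`.
An `(ℓ+2)`-link is recoloured from the colours of the cherry formed by its middle `ℓ`-link and its
two end `ℓ`-links: each triple gets two new colours, and there is one spare colour `0`. Since two
adjacent `(ℓ+2)`-links `B.init`, `B.tail` have middles that are adjacent in `L_ℓ(G)`, each of
which is an end of the other link, and since a link has only two ends, the recolouring is proper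
with `⌊2k/3⌋ + 1` colours. Deleting the end edges is itself a homomorphism
`L_{ℓ+2}(G) → L_ℓ(G)`, and `L_0(G)` maps to `G`; iterating both bounds from `χ(G)` gives the
theorem.
-/

/-- The colour of a cherry with middle colour `a` and end colours `s₁`, `s₂` in a `k`-colouring:
`3i ↦ 2i+1`, `3i+1 ↦ 2i+2`, and `3i+2` takes `2i+1` unless `3i` is an end colour, then `2i+2`
unless `3i+1` is one too, and `0` otherwise. A last colour `k - 1` alone in its triple gets `0`,
and one that is second in its triple is treated like `3i+2` without the option `2i+2`. -/
def cherryColor (k a s₁ s₂ : ℕ) : ℕ :=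
  if a % 3 = 0 then
    (if k % 3 = 1 ∧ a = k - 1 then 0 else 1 + 2 * (a / 3))
  else if a % 3 = 1 then
    (if a = k - 1 then (if a - 1 = s₁ ∨ a - 1 = s₂ then 0 else 1 + 2 * (a / 3))
     else 2 + 2 * (a / 3))
  else
    (if 3 * (a / 3) = s₁ ∨ 3 * (a / 3) = s₂ then
      (if 3 * (a / 3) + 1 = s₁ ∨ 3 * (a / 3) + 1 = s₂ then 0 else 2 + 2 * (a / 3))
     else 1 + 2 * (a / 3))

lemma cherryColor_comm (k a s₁ s₂ : ℕ) : cherryColor k a s₁ s₂ = cherryColor k a s₂ s₁ := by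
  unfold cherryColor
  split_ifs <;> omega

lemma cherryColor_lt {k a : ℕ} (ha : a < k) (s₁ s₂ : ℕ) :
    cherryColor k a s₁ s₂ < 2 * k / 3 + 1 := by
  unfold cherryColor
  split_ifs <;> omega

/-- A cherry only gets `0` when both its end colours lie in its own triple, which leaves no room
for the other middle colour. -/
lemma cherryColor_ne {k a b s₁ s₂ t₁ t₂ : ℕ} (ha : a < k) (hb : b < k) (hab : a ≠ b)
    (hb' : b = s₁ ∨ b = s₂) (ha' : a = t₁ ∨ a = t₂) :
    cherryColor k a s₁ s₂ ≠ cherryColor k b t₁ t₂ := by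
  unfold cherryColor
  split_ifs <;> omega

namespace Multigraph

variable {V E : Type} {G : Multigraph V E}

lemma Link.mk_eq_mk_iff {ℓ : ℕ} {A B : G.Arc ℓ} :
    (Link.mk A : G.Link ℓ) = Link.mk B ↔ B = A ∨ B = A.reverse := by
  refine ⟨fun h => ?_, ?_⟩
  · replace h := Quot.eq.mp h
    induction h with
    | rel x y hxy => exact Or.inr hxy
    | refl x => exact Or.inl rfl
    | symm x y _ ih =>
      rcases ih with rfl | rfl
      · exact Or.inl rfl
      · exact Or.inr x.reverse_reverse.symm
    | trans x y z _ _ ih₁ ih₂ =>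
      rcases ih₂ with rfl | rfl
      · exact ih₁
      · rcases ih₁ with rfl | rfl
        · exact Or.inr rfl
        · exact Or.inl x.reverse_reverse
  · rintro (rfl | rfl)
    · rfl
    · exact (Link.mk_reverse A).symm

lemma Loopless.toSimple_adj (hG : G.Loopless) {e : E} {u v : V} (h : G.inc e = s(u, v)) :
    G.toSimple.Adj u v :=
  ⟨fun huv => hG e (h ▸ Sym2.mk_isDiag_iff.mpr huv), e, h⟩

/-- If the two ends of an `(ℓ+1)`-arc were equal as links, the arc would either repeat its first
vertex (a loop) or be its own reverse, which puts a loop or a backtrack at its middle. -/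
lemma Loopless.mk_init_ne_mk_tail (hG : G.Loopless) {ℓ : ℕ} (A : G.Arc (ℓ + 1)) :
    (Link.mk A.init : G.Link ℓ) ≠ Link.mk A.tail := by
  intro h
  have loop_free (i : Fin (ℓ + 1)) (hi : A.verts i.succ = A.verts i.castSucc) : False :=
    hG (A.edges i) (by rw [A.inc_eq i]; exact Sym2.mk_isDiag_iff.mpr hi.symm)
  rcases Link.mk_eq_mk_iff.mp h with h | h
  · exact loop_free 0 (congrFun (congrArg Arc.verts h) 0)
  · have hv (j : Fin (ℓ + 1)) : A.verts j.succ = A.verts j.rev.castSucc :=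
      congrFun (congrArg Arc.verts h) j
    have he (i : Fin ℓ) : A.edges i.succ = A.edges i.rev.castSucc :=
      congrFun (congrArg Arc.edges h) i
    rcases Nat.even_or_odd ℓ with ⟨m, hm⟩ | ⟨m, hm⟩
    · let j : Fin (ℓ + 1) := ⟨m, by omega⟩
      have hj : j.rev = j := Fin.ext (by simp only [Fin.val_rev, j]; omega)
      exact loop_free j (by rw [hv j, hj])
    · let i : Fin ℓ := ⟨m, by omega⟩
      have hi : i.rev = i := Fin.ext (by simp only [Fin.val_rev, i]; omega)
      exact A.nb i.castSucc i.succ (by simp) (by rw [he i, hi])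

lemma Loopless.linkGraph (hG : G.Loopless) (ℓ : ℕ) : (G.linkGraph ℓ).Loopless := by
  rintro ⟨A⟩
  exact fun h => hG.mk_init_ne_mk_tail A (Sym2.mk_isDiag_iff.mp h)

def linkGraphHom {W : Type*} {H : SimpleGraph W} {ℓ : ℕ} (f : G.Link ℓ → W)
    (hf : ∀ A : G.Arc (ℓ + 1), H.Adj (f (Link.mk A.init)) (f (Link.mk A.tail))) :
    (G.linkGraph ℓ).toSimple →g H where
  toFun := f
  map_rel' := by
    rintro u v ⟨-, ⟨A⟩, he⟩
    rcases Sym2.eq_iff.mp he with ⟨rfl, rfl⟩ | ⟨rfl, rfl⟩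
    · exact hf A
    · exact (hf A).symm

def Link.vertex : G.Link 0 → V :=
  Quot.lift (fun A => A.verts 0) (by rintro A B rfl; rfl)

def Loopless.linkGraphZeroHom (hG : G.Loopless) : (G.linkGraph 0).toSimple →g G.toSimple :=
  linkGraphHom Link.vertex fun A => hG.toSimple_adj (A.inc_eq 0)

lemma Arc.mid2_init {ℓ : ℕ} (B : G.Arc (ℓ + 3)) : B.init.mid2 = B.mid2.init := by
  show B.init.tail.init = B.tail.init.init
  rw [← Arc.tail_init_comm B]

lemma Arc.mid2_tail {ℓ : ℕ} (B : G.Arc (ℓ + 3)) : B.tail.mid2 = B.mid2.tail :=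
  B.tail.tail_init_comm

lemma Arc.init_tail_tail {ℓ : ℕ} (B : G.Arc (ℓ + 3)) : B.init.tail.tail = B.tail.mid2 := by
  rw [Arc.mid2_tail, Arc.mid2, Arc.tail_init_comm B]

def Loopless.linkGraphMid2Hom (hG : G.Loopless) (ℓ : ℕ) :
    (G.linkGraph (ℓ + 2)).toSimple →g (G.linkGraph ℓ).toSimple :=
  linkGraphHom Link.mid2 fun B => by
    show (G.linkGraph ℓ).toSimple.Adj (Link.mk B.init.mid2) (Link.mk B.tail.mid2)
    rw [Arc.mid2_init, Arc.mid2_tail]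
    exact (hG.linkGraph ℓ).toSimple_adj (e := Link.mk B.mid2) rfl


def Link.cherryColor (k : ℕ) {ℓ : ℕ} (φ : G.Link ℓ → ℕ) : G.Link (ℓ + 2) → ℕ :=
  Quot.lift
    (fun A => _root_.cherryColor k (φ (Link.mk A.mid2)) (φ (Link.mk A.init.init))
      (φ (Link.mk A.tail.tail)))
    (by
      rintro A B rfl
      simp only [Arc.mid2_reverse, Arc.reverse_init, Arc.reverse_tail, Link.mk_reverse]
      exact cherryColor_comm _ _ _ _)

theorem Loopless.colorable_linkGraph_add_two (hG : G.Loopless) {ℓ k : ℕ}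
    (h : (G.linkGraph ℓ).toSimple.Colorable k) :
    (G.linkGraph (ℓ + 2)).toSimple.Colorable (2 * k / 3 + 1) := by
  obtain ⟨φ⟩ := h
  let ψ := Link.cherryColor k fun L => (φ L : ℕ)
  have hψ (L : G.Link (ℓ + 2)) : ψ L < 2 * k / 3 + 1 := by
    obtain ⟨A, rfl⟩ := Quot.exists_rep L
    exact cherryColor_lt (φ _).isLt _ _
  refine ⟨linkGraphHom (fun L => (⟨ψ L, hψ L⟩ : Fin (2 * k / 3 + 1))) fun B => ?_⟩
  have hmid : φ (Link.mk B.init.mid2) ≠ φ (Link.mk B.tail.mid2) :=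
    φ.valid ((hG.linkGraphMid2Hom ℓ).map_adj
      ((hG.linkGraph (ℓ + 2)).toSimple_adj (e := Link.mk B) rfl))
  refine (SimpleGraph.top_adj _ _).mpr (Fin.ne_of_val_ne ?_)
  refine cherryColor_ne (φ _).isLt (φ _).isLt (Fin.val_ne_of_ne hmid) ?_ ?_
  · rw [Arc.init_tail_tail]
    exact Or.inr rfl
  · rw [Arc.mid2_init]
    exact Or.inl rfl

end Multigraph

lemma two_mul_div_three_add_one_le (x j : ℕ) :
    2 * (2 ^ j * x / 3 ^ j + 3) / 3 + 1 ≤ 2 ^ (j + 1) * x / 3 ^ (j + 1) + 3 := by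
  have h : 2 * (2 ^ j * x / 3 ^ j) / 3 ≤ 2 ^ (j + 1) * x / 3 ^ (j + 1) :=
    calc 2 * (2 ^ j * x / 3 ^ j) / 3
        ≤ 2 * (2 ^ j * x) / 3 ^ j / 3 := Nat.div_le_div_right (Nat.mul_div_le_mul_div_assoc _ _ _)
      _ = 2 ^ (j + 1) * x / 3 ^ (j + 1) := by
        rw [Nat.div_div_eq_div_mul, ← pow_succ, pow_succ' 2 j, mul_assoc]
  omega

theorem chromatic_linkGraph_even_general {V E : Type} (G : Multigraph V E)
    (hG : G.Loopless) (ℓ : ℕ) (heven : Even ℓ) (c : ℕ)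
    (hc : G.toSimple.chromaticNumber = c) :
    ((G.linkGraph ℓ).toSimple).chromaticNumber
      ≤ ((min c (2 ^ (ℓ / 2) * (c - 3) / 3 ^ (ℓ / 2) + 3) : ℕ) : ℕ∞) := by
  obtain ⟨m, rfl⟩ := heven
  have hG₀ : (G.linkGraph 0).toSimple.Colorable c :=
    (SimpleGraph.chromaticNumber_le_iff_colorable.mp hc.le).of_hom hG.linkGraphZeroHom
  have key (j : ℕ) : (G.linkGraph (j + j)).toSimple.Colorable c ∧
      (G.linkGraph (j + j)).toSimple.Colorable (2 ^ j * (c - 3) / 3 ^ j + 3) := by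
    induction j with
    | zero => exact ⟨hG₀, hG₀.mono (by simp only [pow_zero, one_mul, Nat.div_one]; omega)⟩
    | succ j ih =>
      rw [show j + 1 + (j + 1) = j + j + 2 by omega]
      exact ⟨ih.1.of_hom (hG.linkGraphMid2Hom _),
        (hG.colorable_linkGraph_add_two ih.2).mono (two_mul_div_three_add_one_le _ _)⟩
  rw [show (m + m) / 2 = m by omega]
  exact (min_rec' _ (key m).1 (key m).2).chromaticNumber_le

/-- For a finite loopless multigraph `G` with chromatic number `c` and
even `ℓ ≥ 0`, `χ(L_ℓ(G)) ≤ min {c, ⌊(2/3)^(ℓ/2) (c-3)⌋ + 3}`. -/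
theorem chromatic_linkGraph_even {V E : Type} [Finite V] [Finite E] (G : Multigraph V E)
    (hG : G.Loopless) (ℓ : ℕ) (heven : Even ℓ) (c : ℕ)
    (hc : G.toSimple.chromaticNumber = c) :
    ((G.linkGraph ℓ).toSimple).chromaticNumber
      ≤ ((min c (2 ^ (ℓ / 2) * (c - 3) / 3 ^ (ℓ / 2) + 3) : ℕ) : ℕ∞) :=
  chromatic_linkGraph_even_general G hG ℓ heven c hc
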